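/- Let n ≥ 4 and let E be a maximal prime subspace of ⋀²(ℝⁿ). Let λ ∈ ℝⁿ be nonzero and α₁, α₂ ∈ ⋀²(ℝⁿ) with α₁ ∉ L(λ) and α₂ ∉ L(λ), where L(λ) = E + λ∧ℝⁿ. Then the subspace E + V_{λ,α₁} + V_{λ,α₂} ⊆ ⋀²(ℝ^{n+1}) is prime if and only if α₁ − α₂ ∈ E; and in that case E ⊕ V_{λ,α₁} = E ⊕ V_{λ,α₂}. -/

import Mathlib

set_option synthInstance.maxHeartbeats 1000000
set_option maxHeartbeats 1000000
open ExteriorAlgebra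

/-- The inclusion `ℝⁿ ↪ ℝ^{n+1}`, `x ↦ (x, 0)`. -/
noncomputable def incl (n : ℕ) : (Fin n → ℝ) →ₗ[ℝ] (Fin (n + 1) → ℝ) where
  toFun x := fun j => if h : (j : ℕ) < n then x ⟨j, h⟩ else 0
  map_add' x y := by funext j; by_cases h : (j : ℕ) < n <;> simp [h]
  map_smul' c x := by funext j; by_cases h : (j : ℕ) < n <;> simp [h]

/-- The last standard basis vector `e` of `ℝ^{n+1}`, inside the exterior algebra. -/
noncomputable def elast (n : ℕ) : ExteriorAlgebra ℝ (Fin (n + 1) → ℝ) :=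
  ι ℝ (Pi.single (Fin.last n) (1 : ℝ))

/-- `V_{λ,α} = span{λ∧e + α} ⊆ ⋀²(ℝ^{n+1})` for `λ ∈ ℝⁿ`, `α ∈ ⋀²(ℝⁿ)`. -/
noncomputable def Vspan (n : ℕ) (lam : Fin n → ℝ) (α : ExteriorAlgebra ℝ (Fin n → ℝ)) :
    Submodule ℝ (ExteriorAlgebra ℝ (Fin (n + 1) → ℝ)) :=
  Submodule.span ℝ {ι ℝ (incl n lam) * elast n + ExteriorAlgebra.map (incl n) α}

/-- A subspace of the exterior algebra is prime if each of its nonzero elements has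
injective wedge multiplication by vectors. -/
def IsPrimeSub {V : Type*} [AddCommGroup V] [Module ℝ V]
    (E : Submodule ℝ (ExteriorAlgebra ℝ V)) : Prop :=
  ∀ x ∈ E, x ≠ 0 → ∀ μ : V, μ ≠ 0 → x * ι ℝ μ ≠ 0

/-- `L(λ) = E + λ∧ℝⁿ ⊆ ⋀²(ℝⁿ)`. -/
noncomputable def Lsub (n : ℕ) (E : Submodule ℝ (ExteriorAlgebra ℝ (Fin n → ℝ)))
    (lam : Fin n → ℝ) : Submodule ℝ (ExteriorAlgebra ℝ (Fin n → ℝ)) :=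
  E ⊔ Submodule.span ℝ {z | ∃ v : Fin n → ℝ, z = ι ℝ lam * ι ℝ v}

/-! ### Auxiliary lemmas -/

section aux
open CliffordAlgebra

/-- A left inverse of `incl`. -/
noncomputable def prj (n : ℕ) : (Fin (n+1) → ℝ) →ₗ[ℝ] (Fin n → ℝ) :=
  LinearMap.funLeft ℝ ℝ (Fin.castSucc)

/-- The dual functional extracting the last coordinate. -/
noncomputable def fdual (n : ℕ) : Module.Dual ℝ (Fin (n+1) → ℝ) :=
  LinearMap.proj (Fin.last n)

lemma prj_incl (n : ℕ) (v : Fin n → ℝ) : prj n (incl n v) = v := by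
  funext i
  simp [prj, incl, LinearMap.funLeft, Fin.castSucc, Fin.is_lt]

lemma incl_inj (n : ℕ) : Function.Injective (incl n) := by
  intro a b h
  have := congrArg (prj n) h
  simpa [prj_incl] using this

lemma fdual_incl (n : ℕ) (v : Fin n → ℝ) : fdual n (incl n v) = 0 := by
  simp [fdual, incl]

lemma fdual_e (n : ℕ) : fdual n (Pi.single (Fin.last n) (1:ℝ)) = 1 := by
  simp [fdual]

lemma decomp (n : ℕ) (μ : Fin (n+1) → ℝ) :
    μ = incl n (prj n μ)
      + (μ (Fin.last n)) • (Pi.single (Fin.last n) (1:ℝ) : Fin (n+1) → ℝ) := by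
  funext j
  by_cases h : (j : ℕ) < n
  · have hne : j ≠ Fin.last n := by
      intro hj; rw [hj] at h; simp [Fin.last] at h
    have : Fin.castSucc (⟨(j:ℕ), h⟩ : Fin n) = j := by ext; simp
    simp [incl, prj, LinearMap.funLeft, h, Pi.single_apply, hne, this]
  · have hj : j = Fin.last n := by
      ext
      simpa [Fin.last, Nat.lt_succ_iff] using
        le_antisymm (Nat.lt_succ_iff.mp j.is_lt) (not_lt.mp h)
    subst hj
    simp [incl, prj, Pi.single_apply, Fin.last]

lemma Jinj (n : ℕ) : Function.Injective (ExteriorAlgebra.map (incl n)) := by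
  have hcomp : (ExteriorAlgebra.map (prj n)).comp (ExteriorAlgebra.map (incl n))
      = AlgHom.id ℝ _ := by
    rw [ExteriorAlgebra.map_comp_map]
    have : (prj n).comp (incl n) = LinearMap.id := by
      refine LinearMap.ext fun v => ?_
      simp [prj_incl]
    rw [this, ExteriorAlgebra.map_id]
  intro a b h
  have := congrArg (ExteriorAlgebra.map (prj n)) h
  rwa [← AlgHom.comp_apply, ← AlgHom.comp_apply, hcomp, AlgHom.id_apply,
    AlgHom.id_apply] at this

variable {V : Type*} [AddCommGroup V] [Module ℝ V]

lemma ι_anticomm (a b : V) :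
    ExteriorAlgebra.ι ℝ a * ExteriorAlgebra.ι ℝ b
      = -(ExteriorAlgebra.ι ℝ b * ExteriorAlgebra.ι ℝ a) :=
  eq_neg_of_add_eq_zero_left (ExteriorAlgebra.ι_add_mul_swap a b)

lemma contract_mul_of_ker {W : Type*} [AddCommGroup W] [Module ℝ W]
    (f : Module.Dual ℝ W) (j : V →ₗ[ℝ] W) (hf : ∀ v, f (j v) = 0)
    (y : ExteriorAlgebra ℝ V) (z : ExteriorAlgebra ℝ W) :
    contractLeft f (ExteriorAlgebra.map j y * z)
      = involute (ExteriorAlgebra.map j y) * contractLeft f z := by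
  induction y using ExteriorAlgebra.induction generalizing z with
  | algebraMap r =>
      simp only [AlgHom.commutes]
      rw [← Algebra.smul_def, map_smul, ← Algebra.smul_def]
  | ι v =>
      rw [ExteriorAlgebra.map_apply_ι]
      rw [show (ExteriorAlgebra.ι ℝ (j v)) * z = CliffordAlgebra.ι 0 (j v) * z from rfl]
      rw [contractLeft_ι_mul, hf, involute_ι, zero_smul, zero_sub, neg_mul]
  | mul a b ha hb =>
      rw [_root_.map_mul (ExteriorAlgebra.map j), mul_assoc, ha, hb,
        _root_.map_mul (involute : ExteriorAlgebra ℝ W →ₐ[ℝ] _), mul_assoc]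
  | add a b ha hb =>
      rw [_root_.map_add (ExteriorAlgebra.map j), add_mul, map_add, ha z, hb z,
        map_add, add_mul]

lemma contract_map_eq_zero {W : Type*} [AddCommGroup W] [Module ℝ W]
    (f : Module.Dual ℝ W) (j : V →ₗ[ℝ] W) (hf : ∀ v, f (j v) = 0)
    (y : ExteriorAlgebra ℝ V) :
    contractLeft f (ExteriorAlgebra.map j y) = 0 := by
  have h := contract_mul_of_ker f j hf y 1
  rw [mul_one] at h
  rw [h, show (1 : ExteriorAlgebra ℝ W) = algebraMap ℝ _ 1 from (map_one _).symm,
    contractLeft_algebraMap, mul_zero]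

/-- Splitting: if `J a + (J b) ∧ e = 0` then `a = 0` and `b = 0`. -/
lemma split (n : ℕ) {a b : ExteriorAlgebra ℝ (Fin n → ℝ)}
    (h : ExteriorAlgebra.map (incl n) a
        + ExteriorAlgebra.map (incl n) b
          * ExteriorAlgebra.ι ℝ (Pi.single (Fin.last n) (1:ℝ)) = 0) :
    a = 0 ∧ b = 0 := by
  have hd := congrArg (contractLeft (fdual n)) h
  rw [map_add, map_zero, contract_map_eq_zero (fdual n) (incl n) (fdual_incl n) a,
    contract_mul_of_ker (fdual n) (incl n) (fdual_incl n) b,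
    show contractLeft (fdual n) (ExteriorAlgebra.ι ℝ (Pi.single (Fin.last n) (1:ℝ)))
      = algebraMap ℝ _ (fdual n (Pi.single (Fin.last n) (1:ℝ))) from contractLeft_ι _ _ _,
    fdual_e, map_one, mul_one, zero_add] at hd
  have hb : ExteriorAlgebra.map (incl n) b = 0 := by
    have := congrArg (involute (R := ℝ)) hd
    rwa [involute_involute, map_zero] at this
  have hb0 : b = 0 := by
    apply Jinj n; rw [hb, map_zero]
  refine ⟨?_, hb0⟩
  apply Jinj n
  rw [map_zero]
  rw [hb, zero_mul, add_zero] at h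
  exact h

lemma contract_ι_mul_ι (g : Module.Dual ℝ V) (a b : V) :
    contractLeft g (ExteriorAlgebra.ι ℝ a * ExteriorAlgebra.ι ℝ b)
      = ExteriorAlgebra.ι ℝ (g a • b - g b • a) := by
  rw [show (ExteriorAlgebra.ι ℝ a) * ExteriorAlgebra.ι ℝ b
      = CliffordAlgebra.ι 0 a * CliffordAlgebra.ι 0 b from rfl,
    contractLeft_ι_mul, contractLeft_ι, ← Algebra.commutes, ← Algebra.smul_def,
    map_sub, map_smul, map_smul]

lemma contract_two_mem_range (g : Module.Dual ℝ V) {β : ExteriorAlgebra ℝ V}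
    (hβ : β ∈ ⋀[ℝ]^2 V) :
    contractLeft g β ∈ LinearMap.range (ExteriorAlgebra.ι ℝ : V →ₗ[ℝ] _) := by
  rw [show ⋀[ℝ]^2 V = LinearMap.range (ExteriorAlgebra.ι ℝ : V →ₗ[ℝ] _) *
      LinearMap.range (ExteriorAlgebra.ι ℝ : V →ₗ[ℝ] _) from sq _] at hβ
  refine Submodule.mul_induction_on hβ ?_ ?_
  · rintro _ ⟨a, rfl⟩ _ ⟨b, rfl⟩
    rw [contract_ι_mul_ι]; exact ⟨_, rfl⟩
  · intro x y hx hy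
    rw [map_add]; exact add_mem hx hy

lemma contract_two_mul_ι (g : Module.Dual ℝ V) {β : ExteriorAlgebra ℝ V}
    (hβ : β ∈ ⋀[ℝ]^2 V) (u : V) :
    contractLeft g (β * ExteriorAlgebra.ι ℝ u)
      = contractLeft g β * ExteriorAlgebra.ι ℝ u + g u • β := by
  rw [show ⋀[ℝ]^2 V = LinearMap.range (ExteriorAlgebra.ι ℝ : V →ₗ[ℝ] _) *
      LinearMap.range (ExteriorAlgebra.ι ℝ : V →ₗ[ℝ] _) from sq _] at hβ
  refine Submodule.mul_induction_on hβ ?_ ?_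
  · rintro _ ⟨a, rfl⟩ _ ⟨b, rfl⟩
    rw [mul_assoc, contract_ι_mul_ι,
      show (ExteriorAlgebra.ι ℝ a) * (ExteriorAlgebra.ι ℝ b * ExteriorAlgebra.ι ℝ u)
        = CliffordAlgebra.ι 0 a * (CliffordAlgebra.ι 0 b * CliffordAlgebra.ι 0 u) from rfl,
      contractLeft_ι_mul, contract_ι_mul_ι]
    simp only [map_sub, map_smul, smul_sub, mul_sub, sub_mul, smul_mul_assoc,
      mul_smul_comm]
    abel
  · intro x y hx hy
    simp only [map_add, add_mul, smul_add]
    rw [hx, hy]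
    abel

lemma exists_dual_one {n : ℕ} {v : Fin n → ℝ} (hv : v ≠ 0) :
    ∃ g : Module.Dual ℝ (Fin n → ℝ), g v = 1 := by
  obtain ⟨i, hi⟩ := Function.ne_iff.mp hv
  refine ⟨(v i)⁻¹ • LinearMap.proj i, ?_⟩
  simp [inv_mul_cancel₀ (by simpa using hi)]

lemma colin {n : ℕ} {lam v : Fin n → ℝ} (hlam : lam ≠ 0)
    (h : ExteriorAlgebra.ι ℝ lam * ExteriorAlgebra.ι ℝ v = 0) :
    ∃ s : ℝ, v = s • lam := by
  obtain ⟨g, hg⟩ := exists_dual_one hlam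
  have h2 := congrArg (contractLeft g) h
  rw [contract_ι_mul_ι, map_zero] at h2
  have h3 : (g lam) • v - (g v) • lam = 0 := by
    rwa [ExteriorAlgebra.ι_eq_zero_iff] at h2
  refine ⟨g v, ?_⟩
  rw [hg, one_smul, sub_eq_zero] at h3
  exact h3

/-- Divisibility: a 2-form annihilated by wedging with `v ≠ 0` is divisible by `v`. -/
lemma div2 {n : ℕ} {β : ExteriorAlgebra ℝ (Fin n → ℝ)}
    (hβ : β ∈ ⋀[ℝ]^2 (Fin n → ℝ)) {v : Fin n → ℝ} (hv : v ≠ 0)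
    (h : β * ExteriorAlgebra.ι ℝ v = 0) :
    ∃ w : Fin n → ℝ, β = ExteriorAlgebra.ι ℝ v * ExteriorAlgebra.ι ℝ w := by
  obtain ⟨g, hg⟩ := exists_dual_one hv
  have h2 := congrArg (contractLeft g) h
  rw [map_zero, contract_two_mul_ι g hβ v, hg, one_smul] at h2
  obtain ⟨w, hw⟩ := contract_two_mem_range g hβ
  refine ⟨w, ?_⟩
  rw [← hw] at h2
  rw [ι_anticomm]
  exact eq_neg_of_add_eq_zero_right h2

lemma mul_expand (n : ℕ) (η α : ExteriorAlgebra ℝ (Fin n → ℝ))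
    (lam v : Fin n → ℝ) (c t : ℝ) (e : Fin (n+1) → ℝ) :
    (ExteriorAlgebra.map (incl n) η
      + c • (ExteriorAlgebra.ι ℝ (incl n lam) * ExteriorAlgebra.ι ℝ e
             + ExteriorAlgebra.map (incl n) α))
    * (ExteriorAlgebra.ι ℝ (incl n v) + t • ExteriorAlgebra.ι ℝ e)
    = ExteriorAlgebra.map (incl n) ((η + c • α) * ExteriorAlgebra.ι ℝ v)
      + ExteriorAlgebra.map (incl n)
          (t • η + (c*t) • α - c • (ExteriorAlgebra.ι ℝ lam * ExteriorAlgebra.ι ℝ v))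
        * ExteriorAlgebra.ι ℝ e := by
  have hswap : ExteriorAlgebra.ι ℝ e * ExteriorAlgebra.ι ℝ (incl n v)
      = -(ExteriorAlgebra.ι ℝ (incl n v) * ExteriorAlgebra.ι ℝ e) := ι_anticomm _ _
  have hsq : ExteriorAlgebra.ι ℝ e * ExteriorAlgebra.ι ℝ e = 0 :=
    ExteriorAlgebra.ι_sq_zero e
  simp only [map_add, map_sub, map_smul, _root_.map_mul, ExteriorAlgebra.map_apply_ι,
    add_mul, mul_add, smul_mul_assoc, mul_smul_comm, smul_smul, sub_mul, smul_add]
  rw [mul_assoc, hswap, mul_assoc, hsq, mul_zero, smul_zero]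
  ring_nf
  simp only [mul_neg, smul_neg, ← mul_assoc]
  abel

/-- The core primeness result: `E + V_{λ,α}` is prime whenever `E` is a prime subspace of
2-forms, `λ ≠ 0` and `α ∉ L(λ)`. -/
lemma prime_sup (n : ℕ) (E : Submodule ℝ (ExteriorAlgebra ℝ (Fin n → ℝ)))
    (hE : E ≤ ⋀[ℝ]^2 (Fin n → ℝ)) (hEprime : IsPrimeSub E)
    (lam : Fin n → ℝ) (hlam : lam ≠ 0)
    (α : ExteriorAlgebra ℝ (Fin n → ℝ)) (hα : α ∈ ⋀[ℝ]^2 (Fin n → ℝ))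
    (hαL : α ∉ Lsub n E lam) :
    IsPrimeSub (E.map (ExteriorAlgebra.map (incl n)).toLinearMap ⊔ Vspan n lam α) := by
  intro x hx hx0 μ hμ0 hcon
  obtain ⟨a, ha, b, hb, rfl⟩ := Submodule.mem_sup.mp hx
  obtain ⟨η, hη, rfl⟩ := ha
  obtain ⟨c, rfl⟩ := Submodule.mem_span_singleton.mp hb
  set v := prj n μ with hv
  set t := μ (Fin.last n) with ht
  have hμdec : μ = incl n v
      + t • (Pi.single (Fin.last n) (1:ℝ) : Fin (n+1) → ℝ) := by
    rw [hv, ht]; exact decomp n μ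
  clear_value v t
  clear hv ht
  have hιμ : ExteriorAlgebra.ι ℝ μ
      = ExteriorAlgebra.ι ℝ (incl n v)
        + t • ExteriorAlgebra.ι ℝ (Pi.single (Fin.last n) (1:ℝ)) := by
    have := congrArg (ExteriorAlgebra.ι ℝ) hμdec
    rwa [map_add, map_smul] at this
  rw [hιμ] at hcon
  have hcon' : (ExteriorAlgebra.map (incl n) η
      + c • (ExteriorAlgebra.ι ℝ (incl n lam)
              * ExteriorAlgebra.ι ℝ (Pi.single (Fin.last n) (1:ℝ))
             + ExteriorAlgebra.map (incl n) α))
      * (ExteriorAlgebra.ι ℝ (incl n v)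
         + t • ExteriorAlgebra.ι ℝ (Pi.single (Fin.last n) (1:ℝ))) = 0 := hcon
  rw [mul_expand n η α lam v c t (Pi.single (Fin.last n) (1:ℝ))] at hcon'
  obtain ⟨hA, hB⟩ := split n hcon'
  -- `v = 0` would force `t ≠ 0`
  have hv0 : t = 0 → v ≠ 0 := by
    intro ht0 hv0
    apply hμ0
    rw [hμdec, ht0, hv0, zero_smul, add_zero, map_zero]
  by_cases hc : c = 0
  · -- x = J η
    subst hc
    rw [zero_smul, add_zero] at hx0
    have hη0 : η ≠ 0 := by
      rintro rfl
      simp at hx0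
    rw [zero_smul, add_zero] at hA
    rw [zero_mul, zero_smul, zero_smul, sub_zero, add_zero] at hB
    have ht0 : t = 0 := by
      rcases smul_eq_zero.mp hB with h | h
      · exact h
      · exact absurd h hη0
    exact hEprime η hη hη0 v (hv0 ht0) hA
  · by_cases ht0 : t = 0
    · -- B = 0 gives `ι lam * ι v = 0`, so `v` is colinear with `lam`
      rw [ht0, zero_smul, mul_zero, zero_smul, zero_add, zero_sub, neg_eq_zero] at hB
      have hlv : ExteriorAlgebra.ι ℝ lam * ExteriorAlgebra.ι ℝ v = 0 :=
        (smul_eq_zero.mp hB).resolve_left hc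
      obtain ⟨s, rfl⟩ := colin hlam hlv
      have hs0 : s ≠ 0 := by
        rintro rfl
        exact hv0 ht0 (zero_smul _ _)
      have hβ2 : η + c • α ∈ ⋀[ℝ]^2 (Fin n → ℝ) :=
        add_mem (hE hη) (Submodule.smul_mem _ _ hα)
      have hβlam : (η + c • α) * ExteriorAlgebra.ι ℝ lam = 0 := by
        rw [map_smul, mul_smul_comm] at hA
        exact (smul_eq_zero.mp hA).resolve_left hs0
      obtain ⟨w, hw⟩ := div2 hβ2 hlam hβlam
      apply hαL
      have hαeq : α = c⁻¹ • (ExteriorAlgebra.ι ℝ lam * ExteriorAlgebra.ι ℝ w)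
          + (-c⁻¹) • η := by
        rw [← hw]
        match_scalars <;> field_simp <;> ring
      rw [hαeq]
      refine add_mem ?_ ?_
      · refine Submodule.mem_sup_right (Submodule.subset_span ?_)
        exact ⟨c⁻¹ • w, by rw [map_smul, mul_smul_comm]⟩
      · exact Submodule.mem_sup_left (Submodule.smul_mem _ _ hη)
    · -- t ≠ 0 : α ∈ L(λ) from B = 0
      apply hαL
      have h1 : (c*t) • α = c • (ExteriorAlgebra.ι ℝ lam * ExteriorAlgebra.ι ℝ v)
          - t • η := eq_sub_of_add_eq' (sub_eq_zero.mp hB)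
      have h2 : α = (c*t)⁻¹ • (c • (ExteriorAlgebra.ι ℝ lam * ExteriorAlgebra.ι ℝ v)
          - t • η) := by
        rw [← h1, inv_smul_smul₀ (mul_ne_zero hc ht0)]
      have hαeq : α = t⁻¹ • (ExteriorAlgebra.ι ℝ lam * ExteriorAlgebra.ι ℝ v)
          + (-c⁻¹) • η := by
        rw [h2]
        match_scalars <;> (field_simp; try ring)
      rw [hαeq]
      refine add_mem ?_ ?_
      · refine Submodule.mem_sup_right (Submodule.subset_span ?_)
        exact ⟨t⁻¹ • v, by rw [map_smul, mul_smul_comm]⟩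
      · exact Submodule.mem_sup_left (Submodule.smul_mem _ _ hη)

end aux

theorem stmt_6 (n : ℕ) (hn : 4 ≤ n)
    (E : Submodule ℝ (ExteriorAlgebra ℝ (Fin n → ℝ)))
    (hE : E ≤ ⋀[ℝ]^2 (Fin n → ℝ)) (hEprime : IsPrimeSub E)
    (hmax : ∀ E' : Submodule ℝ (ExteriorAlgebra ℝ (Fin n → ℝ)),
      E' ≤ ⋀[ℝ]^2 (Fin n → ℝ) → IsPrimeSub E' → E ≤ E' → E' = E)
    (lam : Fin n → ℝ) (hlam : lam ≠ 0)
    (α₁ α₂ : ExteriorAlgebra ℝ (Fin n → ℝ))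
    (hα₁ : α₁ ∈ ⋀[ℝ]^2 (Fin n → ℝ)) (hα₂ : α₂ ∈ ⋀[ℝ]^2 (Fin n → ℝ))
    (hα₁L : α₁ ∉ Lsub n E lam) (hα₂L : α₂ ∉ Lsub n E lam) :
    (IsPrimeSub (E.map (ExteriorAlgebra.map (incl n)).toLinearMap ⊔
        Vspan n lam α₁ ⊔ Vspan n lam α₂) ↔ α₁ - α₂ ∈ E) ∧
    (α₁ - α₂ ∈ E →
      E.map (ExteriorAlgebra.map (incl n)).toLinearMap ⊔ Vspan n lam α₁ =
        E.map (ExteriorAlgebra.map (incl n)).toLinearMap ⊔ Vspan n lam α₂) := by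
  -- generator notation
  set J := ExteriorAlgebra.map (incl n) with hJ
  have genmem : ∀ β, ExteriorAlgebra.ι ℝ (incl n lam) * elast n + J β ∈ Vspan n lam β :=
    fun β => Submodule.subset_span rfl
  -- if `a - b ∈ E` then `V_b ≤ E.map ⊔ V_a`
  have Vle : ∀ a b : ExteriorAlgebra ℝ (Fin n → ℝ), a - b ∈ E →
      Vspan n lam b ≤ E.map J.toLinearMap ⊔ Vspan n lam a := by
    intro a b hab
    rw [Vspan, Submodule.span_le, Set.singleton_subset_iff]
    have heq : ExteriorAlgebra.ι ℝ (incl n lam) * elast n + J b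
        = J (b - a) + (ExteriorAlgebra.ι ℝ (incl n lam) * elast n + J a) := by
      rw [map_sub]; abel
    rw [SetLike.mem_coe, heq]
    refine add_mem (Submodule.mem_sup_left ?_) (Submodule.mem_sup_right (genmem a))
    exact ⟨b - a, by rw [show b - a = -(a-b) by abel]; exact neg_mem hab, rfl⟩
  constructor
  · constructor
    · -- primeness implies α₁ - α₂ ∈ E
      intro hP
      set E' : Submodule ℝ (ExteriorAlgebra ℝ (Fin n → ℝ)) :=
        E ⊔ Submodule.span ℝ {α₁ - α₂} with hE'
      have hE'le : E' ≤ ⋀[ℝ]^2 (Fin n → ℝ) := by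
        refine sup_le hE ?_
        rw [Submodule.span_le, Set.singleton_subset_iff]
        exact sub_mem hα₁ hα₂
      have hE'prime : IsPrimeSub E' := by
        intro x hx hx0 μ hμ0 hcon
        obtain ⟨η, hη, b, hb, rfl⟩ := Submodule.mem_sup.mp hx
        obtain ⟨c, rfl⟩ := Submodule.mem_span_singleton.mp hb
        -- J x belongs to the big prime subspace
        have hmem : J (η + c • (α₁ - α₂)) ∈
            E.map J.toLinearMap ⊔ Vspan n lam α₁ ⊔ Vspan n lam α₂ := by
          have heq : J (η + c • (α₁ - α₂))
              = J η + c • (ExteriorAlgebra.ι ℝ (incl n lam) * elast n + J α₁)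
                + (-c) • (ExteriorAlgebra.ι ℝ (incl n lam) * elast n + J α₂) := by
            rw [map_add, map_smul, map_sub]
            module
          rw [heq]
          refine add_mem (add_mem (Submodule.mem_sup_left (Submodule.mem_sup_left ?_))
            (Submodule.mem_sup_left (Submodule.mem_sup_right ?_))) (Submodule.mem_sup_right ?_)
          · exact ⟨η, hη, rfl⟩
          · exact Submodule.smul_mem _ _ (genmem α₁)
          · exact Submodule.smul_mem _ _ (genmem α₂)
        have hJx0 : J (η + c • (α₁ - α₂)) ≠ 0 := by
          intro h
          exact hx0 (Jinj n (by rwa [map_zero]))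
        have hι0 : incl n μ ≠ 0 := by
          intro h
          exact hμ0 (incl_inj n (by rwa [map_zero]))
        refine hP _ hmem hJx0 (incl n μ) hι0 ?_
        rw [← ExteriorAlgebra.map_apply_ι (incl n), ← _root_.map_mul J, hcon, map_zero]
      have := hmax E' hE'le hE'prime le_sup_left
      rw [← this]
      exact Submodule.mem_sup_right (Submodule.subset_span rfl)
    · -- α₁ - α₂ ∈ E implies primeness
      intro hd
      have hcollapse : E.map J.toLinearMap ⊔ Vspan n lam α₁ ⊔ Vspan n lam α₂
          = E.map J.toLinearMap ⊔ Vspan n lam α₁ :=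
        sup_eq_left.mpr (Vle α₁ α₂ hd)
      rw [hcollapse]
      exact prime_sup n E hE hEprime lam hlam α₁ hα₁ hα₁L
  · intro hd
    refine le_antisymm (sup_le le_sup_left (Vle α₂ α₁ ?_))
      (sup_le le_sup_left (Vle α₁ α₂ hd))
    rw [show α₂ - α₁ = -(α₁ - α₂) by abel]
    exact neg_mem hd
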